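/- Suppose X_i is the spin at vertex i in an (α,β)-nondegenerate Ising model on n nodes and j is a neighbor of i (i.e. J_{ij} ≠ 0). Then for any fixing x_{≠i,j} ∈ {-1,1}^{n-2} of the spins other than i and j, | E[X_i | X_j = 1, X_{≠i,j} = x_{≠i,j}] − E[X_i | X_j = -1, X_{≠i,j} = x_{≠i,j}] | ≥ 2α(1 − tanh²(β)). -/

import Mathlib

open Finset
open scoped BigOperators Classical

noncomputable section

/-- The value of a spin: `true ↦ 1`, `false ↦ -1`. -/
def spin (b : Bool) : ℝ := if b then 1 else -1

/-- Boltzmann weight of a configuration of the Ising model `μ(J,h)`. -/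
def isingWeight (n : ℕ) (J : Fin n → Fin n → ℝ) (h : Fin n → ℝ) (x : Fin n → Bool) : ℝ :=
  Real.exp ((1 / 2) * (∑ a, ∑ b, J a b * spin (x a) * spin (x b)) + ∑ a, h a * spin (x a))

/-- Conditional expectation of `X_i` given `X_j = b` and `X_l = z_l` for all `l ≠ i, j`. -/
def condExpSpin (n : ℕ) (J : Fin n → Fin n → ℝ) (h : Fin n → ℝ) (i j : Fin n) (b : Bool)
    (z : Fin n → Bool) : ℝ :=
  (∑ x : Fin n → Bool,
      if x j = b ∧ ∀ l : Fin n, l ≠ i → l ≠ j → x l = z l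
      then spin (x i) * isingWeight n J h x else 0) /
  (∑ x : Fin n → Bool,
      if x j = b ∧ ∀ l : Fin n, l ≠ i → l ≠ j → x l = z l
      then isingWeight n J h x else 0)

/-! Fixing every spin but `X_i` leaves a two-point law whose log-odds is twice the local field
`m_i = ∑_c J_ic x_c + h_i`, so the conditional mean of `X_i` is `tanh m_i`. Flipping `X_j` moves
`m_i` by `2 J_ij`, and nondegeneracy keeps `|m_i| ≤ β`; since `tanh u - tanh v =
sinh (u - v) / (cosh u cosh v)` and `cosh ≤ cosh β` on `[-β, β]`, the two conditional means
differ by at least `2 |J_ij| (1 - tanh² β) ≥ 2 α (1 - tanh² β)`. -/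

open Function

namespace Real

lemma one_sub_tanh_sq (x : ℝ) : 1 - tanh x ^ 2 = 1 / cosh x ^ 2 := by
  rw [tanh_eq_sinh_div_cosh, div_pow, eq_div_iff (pow_pos (cosh_pos x) 2).ne', sub_mul,
    div_mul_cancel₀ _ (pow_pos (cosh_pos x) 2).ne', one_mul, cosh_sq']
  ring

lemma tanh_sub_tanh (u v : ℝ) : tanh u - tanh v = sinh (u - v) / (cosh u * cosh v) := by
  rw [sinh_sub, tanh_eq_sinh_div_cosh, tanh_eq_sinh_div_cosh,
    div_sub_div _ _ (cosh_pos u).ne' (cosh_pos v).ne']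

lemma abs_sub_mul_one_sub_tanh_sq_le_abs_tanh_sub {u v β : ℝ} (hu : |u| ≤ β)
    (hv : |v| ≤ β) :
    |u - v| * (1 - tanh β ^ 2) ≤ |tanh u - tanh v| := by
  have hcu := cosh_pos u
  have hcv := cosh_pos v
  have hcosh : cosh u * cosh v ≤ cosh β ^ 2 := by
    rw [sq]
    exact mul_le_mul (cosh_le_cosh.2 (hu.trans (le_abs_self β)))
      (cosh_le_cosh.2 (hv.trans (le_abs_self β))) hcv.le (cosh_pos β).le
  rw [tanh_sub_tanh, abs_div, abs_of_pos (mul_pos hcu hcv), abs_sinh, one_sub_tanh_sq,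
    mul_one_div]
  exact div_le_div₀ (sinh_nonneg_iff.2 (abs_nonneg _)) (self_le_sinh_iff.2 (abs_nonneg _))
    (by positivity) hcosh

lemma exp_sub_exp_div_exp_add_exp (a b : ℝ) :
    (exp a - exp b) / (exp a + exp b) = tanh ((a - b) / 2) := by
  have ha : exp a = exp ((a + b) / 2) * exp ((a - b) / 2) := by rw [← exp_add]; ring_nf
  have hb : exp b = exp ((a + b) / 2) * exp (-((a - b) / 2)) := by rw [← exp_add]; ring_nf
  rw [tanh_eq, ha, hb, ← mul_sub, ← mul_add, mul_div_mul_left _ _ (exp_pos _).ne']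

end Real

lemma Fintype.sum_update_eq_sum_ite {ι β M : Type*} [Fintype ι] [DecidableEq ι] [Fintype β]
    [DecidableEq β] [AddCommMonoid M] (z : ι → β) (i : ι) (f : (ι → β) → M) :
    ∑ b, f (update z i b) = ∑ x, if ∀ l ≠ i, x l = z l then f x else 0 := by
  rw [← sum_filter, ← sum_image (fun _ _ _ _ ↦ (update_injective z i ·))]
  congr 1
  ext x
  simp [eq_comm, eq_update_iff]

section

variable {ι : Type*} [Fintype ι] (J : ι → ι → ℝ) (h : ι → ℝ)

def isingEnergy (s : ι → ℝ) : ℝ :=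
  (1 / 2) * (∑ a, ∑ b, J a b * s a * s b) + ∑ a, h a * s a

def localField (i : ι) (s : ι → ℝ) : ℝ :=
  ∑ c, J i c * s c + h i

lemma abs_localField_le (i : ι) {s : ι → ℝ} (hs : ∀ c, |s c| ≤ 1) :
    |localField J h i s| ≤ ∑ c, |J i c| + |h i| := by
  refine (abs_add_le _ _).trans ?_
  gcongr
  refine (Finset.abs_sum_le_sum_abs _ _).trans (Finset.sum_le_sum fun c _ ↦ ?_)
  rw [abs_mul]
  exact mul_le_of_le_one_right (abs_nonneg _) (hs c)

variable [DecidableEq ι]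

lemma localField_update (i j : ι) (s : ι → ℝ) (σ : ℝ) :
    localField J h i (update s j σ) = localField J h i s + J i j * (σ - s j) := by
  have hterm : ∀ c, J i c * update s j σ c =
      J i c * s c + if c = j then J i j * (σ - s j) else 0 := by
    intro c
    by_cases hc : c = j
    · rw [hc, update_self, if_pos rfl]; ring
    · rw [update_of_ne hc, if_neg hc, add_zero]
  simp only [localField, hterm, Finset.sum_add_distrib, Finset.sum_ite_eq', Finset.mem_univ,
    if_true]
  ring

variable {J}

lemma isingEnergy_update (hsymm : ∀ a b, J a b = J b a) (hdiag : ∀ a, J a a = 0)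
    (i : ι) (s : ι → ℝ) (σ : ℝ) :
    isingEnergy J h (update s i σ) = isingEnergy J h (update s i 0) + σ * localField J h i s := by
  have hu : ∀ a, update s i σ a = update s i 0 a + if a = i then σ else 0 := by
    intro a
    by_cases ha : a = i
    · rw [ha, update_self, update_self, if_pos rfl, zero_add]
    · rw [update_of_ne ha, update_of_ne ha, if_neg ha, add_zero]
  have hloc : localField J h i s = localField J h i (update s i 0) := by
    rw [localField_update, hdiag, zero_mul, add_zero]
  rw [hloc]
  simp only [isingEnergy, hu, localField, mul_add, add_mul, Finset.sum_add_distrib, mul_ite,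
    ite_mul, mul_zero, zero_mul, Finset.sum_ite_irrel, Finset.sum_const_zero, Finset.sum_ite_eq',
    Finset.mem_univ, if_true, hdiag, hsymm _ i, mul_right_comm _ σ, ← Finset.sum_mul]
  ring

end

lemma spin_true : spin true = 1 := rfl

lemma spin_false : spin false = -1 := rfl

lemma abs_spin (b : Bool) : |spin b| = 1 := by cases b <;> simp [spin]

section

variable {n : ℕ} {J : Fin n → Fin n → ℝ} (h : Fin n → ℝ)

lemma isingWeight_eq_exp_isingEnergy (x : Fin n → Bool) :
    isingWeight n J h x = Real.exp (isingEnergy J h (spin ∘ x)) := rfl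

lemma condExpSpin_eq_tanh_localField (hsymm : ∀ a b, J a b = J b a) (hdiag : ∀ a, J a a = 0)
    {i j : Fin n} (hij : i ≠ j) (b : Bool) (z : Fin n → Bool) :
    condExpSpin n J h i j b z = Real.tanh (localField J h i (spin ∘ update z j b)) := by
  have hcond : ∀ x : Fin n → Bool, (x j = b ∧ ∀ l, l ≠ i → l ≠ j → x l = z l) ↔
      ∀ l ≠ i, x l = update z j b l := by
    refine fun x ↦ ⟨fun ⟨hxj, hx⟩ l hli ↦ ?_, fun hx ↦ ⟨?_, fun l hli hlj ↦ ?_⟩⟩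
    · by_cases hlj : l = j
      · simp [hlj, hxj]
      · simp [hlj, hx l hli hlj]
    · simpa using hx j hij.symm
    · simpa [hlj] using hx l hli
  have hsum : ∀ f : (Fin n → Bool) → ℝ,
      (∑ x, if x j = b ∧ ∀ l, l ≠ i → l ≠ j → x l = z l then f x else 0) =
        f (update (update z j b) i true) + f (update (update z j b) i false) := by
    intro f
    rw [← Fintype.sum_bool (fun c ↦ f (update (update z j b) i c)),
      Fintype.sum_update_eq_sum_ite]
    exact Finset.sum_congr rfl fun x _ ↦ by simp only [hcond]; congr
  rw [condExpSpin, hsum, hsum]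
  simp only [isingWeight_eq_exp_isingEnergy, comp_update spin (update z j b), update_self,
    spin_true, spin_false]
  rw [isingEnergy_update h hsymm hdiag i _ 1, isingEnergy_update h hsymm hdiag i _ (-1), one_mul,
    neg_one_mul, ← sub_eq_add_neg, Real.exp_sub_exp_div_exp_add_exp]
  ring_nf

end

/-- In an `(α,β)`-nondegenerate Ising model, flipping a neighbor `j` changes the
conditional expectation of `X_i` by at least `2α(1 - tanh²(β))`, for any fixing of the
remaining spins. -/
theorem tanh_sensitivity (n : ℕ) (J : Fin n → Fin n → ℝ) (h : Fin n → ℝ) (α β : ℝ)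
    (hsymm : ∀ a b, J a b = J b a) (hdiag : ∀ a, J a a = 0)
    (hα : ∀ a b, J a b ≠ 0 → α < |J a b|)
    (hβ : ∀ a, (∑ b, |J a b|) + |h a| ≤ β)
    (i j : Fin n) (hij : i ≠ j) (hneighbor : J i j ≠ 0)
    (z : Fin n → Bool) :
    |condExpSpin n J h i j true z - condExpSpin n J h i j false z| ≥
      2 * α * (1 - Real.tanh β ^ 2) := by
  set M : Bool → ℝ := fun b ↦ localField J h i (spin ∘ update z j b) with hM
  have hM_sub : M true - M false = 2 * J i j := by
    simp only [hM, comp_update, localField_update, spin_true, spin_false]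
    ring
  have hM_le : ∀ b, |M b| ≤ β := fun b ↦
    (abs_localField_le J h i fun c ↦ (abs_spin _).le).trans (hβ i)
  rw [condExpSpin_eq_tanh_localField h hsymm hdiag hij,
    condExpSpin_eq_tanh_localField h hsymm hdiag hij]
  calc 2 * α * (1 - Real.tanh β ^ 2) ≤ |M true - M false| * (1 - Real.tanh β ^ 2) := by
        gcongr
        · exact sub_nonneg.2 (Real.tanh_sq_lt_one β).le
        · rw [hM_sub, abs_mul, abs_two]
          exact (mul_lt_mul_of_pos_left (hα i j hneighbor) two_pos).le
    _ ≤ |Real.tanh (M true) - Real.tanh (M false)| :=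
        Real.abs_sub_mul_one_sub_tanh_sq_le_abs_tanh_sub (hM_le true) (hM_le false)
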